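/- arXiv:2001.11330 — 6 statements merged into one kernel-verified Lean document; each statement's English description precedes it below -/
import Mathlib

section
/- Let f : ℝⁿ → ℝⁿ be continuously differentiable with λ∞(Df(z)) ≤ Λ for all z ∈ ℝⁿ, let g_i : ℝⁿ → ℝⁿ (i = 1,…,m) be continuous with ‖g_i(z)‖ ≤ K_i for all z, and let v_i : [t_k, t_k+h] → ℝ be measurable with |v_i(t)| ≤ V_i. Let x be a solution of ẋ(t) = f(x(t)) + Σ_{i=1}^m g_i(x(t)) v_i(t) on [t_k, t_k+h], and let y be a solution of ẏ(t) = f(y(t)) on [t_k, t_k+h] with y(t_k) = x(t_k). Then ‖x(t_k+h) − y(t_k+h)‖ ≤ h·K'·φ(Λh), where K' = Σ_{i=1}^m V_i K_i. -/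
/-!
Let `z = x - y`. Since `y` is `C¹` and `x - y - ∫ w` has right derivative `f(x t) - f(y t)`, where
`w = Σᵢ vᵢ gᵢ(x)` is bounded by `K'`, the upper right Dini derivative of `‖z‖` at `t` is at most the
right derivative at `ε = 0` of `‖z t + ε (f(x t) - f(y t))‖`, plus `K'`. By the mean value theorem
`z t + ε (f(x t) - f(y t))` is an average of `(I + ε Df(ξ)) z t` over the segment `[y t, x t]`, and
for small `ε ≥ 0` the sup-norm of `I + ε A` is `1 + ε λ∞(A)`, so that Dini derivative is at most
`Λ ‖z t‖ + K'`. Grönwall's inequality with `‖z tₖ‖ = 0` then gives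
`‖z (tₖ + h)‖ ≤ K' (e^{Λh} - 1) / Λ`.
-/

open MeasureTheory Set Filter Topology

/-- `φ(x) = (eˣ − 1)/x` for `x ≠ 0`, `φ(0) = 1`. -/
noncomputable def phi (x : ℝ) : ℝ := if x = 0 then 1 else (Real.exp x - 1) / x

/-- The logarithmic norm `λ∞(A) = max_k ( a_{kk} + Σ_{i≠k} |a_{ki}| )` of a linear map on
`ℝⁿ` with the supremum norm, expressed via its matrix entries `a_{ki} = (A eᵢ)_k`. -/
noncomputable def logNormInf {n : ℕ} (A : (Fin n → ℝ) →L[ℝ] (Fin n → ℝ)) : ℝ :=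
  ⨆ k, (A (Pi.single k 1) k + ∑ i ∈ Finset.univ.erase k, |A (Pi.single i 1) k|)

lemma gronwallBound_zero_eq_mul_phi (Λ K : ℝ) {h : ℝ} (hh : h ≠ 0) :
    gronwallBound 0 Λ K h = h * K * phi (Λ * h) := by
  unfold phi
  by_cases hΛ : Λ = 0
  · simp [hΛ, gronwallBound_K0, mul_comm]
  · rw [gronwallBound_of_K_ne_0 hΛ, if_neg (mul_ne_zero hΛ hh)]
    field_simp
    ring

lemma le_gronwallBound_of_eventually_le {u : ℝ → ℝ} {δ Λ K a b : ℝ}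
    (hu : ContinuousOn u (Icc a b)) (ha : u a ≤ δ)
    (hbound : ∀ t ∈ Ico a b, ∀ r, Λ * u t + K < r →
      ∀ᶠ s in 𝓝[>] t, u s ≤ u t + (s - t) * r) :
    ∀ t ∈ Icc a b, u t ≤ gronwallBound δ Λ K (t - a) := by
  refine le_gronwallBound_of_liminf_deriv_right_le (f' := fun t => Λ * u t + K) hu
    (fun t ht r hr => ?_) ha fun _ _ => le_rfl
  obtain ⟨r', hr', hr'r⟩ := exists_between hr
  refine Eventually.frequently ?_
  filter_upwards [hbound t ht r' hr', self_mem_nhdsWithin] with s hs hts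
  have hst : 0 < s - t := sub_pos.2 hts
  rw [inv_mul_lt_iff₀ hst]
  nlinarith

lemma apply_eq_sum_mul_apply_single {ι : Type*} [Fintype ι] [DecidableEq ι]
    (A : (ι → ℝ) →L[ℝ] (ι → ℝ)) (q : ι → ℝ) (k : ι) :
    A q k = ∑ i, q i * A (Pi.single i 1) k := by
  have hsingle : ∀ i, (Pi.single i 1 : ι → ℝ) = fun j => if i = j then 1 else 0 :=
    fun i => funext fun j => by simp [Pi.single_apply, eq_comm]
  simp only [hsingle]
  simpa [mul_comm] using congr_fun (A.toLinearMap.pi_apply_eq_sum_univ q) k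

lemma row_le_logNormInf {n : ℕ} (A : (Fin n → ℝ) →L[ℝ] (Fin n → ℝ)) (k : Fin n) :
    A (Pi.single k 1) k + ∑ i ∈ Finset.univ.erase k, |A (Pi.single i 1) k| ≤ logNormInf A := by
  unfold logNormInf
  exact le_ciSup
    (f := fun k => A (Pi.single k 1) k + ∑ i ∈ Finset.univ.erase k, |A (Pi.single i 1) k|)
    (Set.finite_range _).bddAbove k

/-- For `0 ≤ ε ≤ 1 / ‖A‖` the diagonal of `I + ε A` is nonnegative, so the row sums of `|I + ε A|`
are `1 + ε rₖ`, where the `rₖ` are the row sums whose maximum is `λ∞(A)`. -/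
lemma norm_add_smul_apply_le {n : ℕ} (A : (Fin n → ℝ) →L[ℝ] (Fin n → ℝ)) (q : Fin n → ℝ)
    {ε : ℝ} (hε : 0 ≤ ε) (hεA : ε * ‖A‖ ≤ 1) :
    ‖q + ε • A q‖ ≤ (1 + ε * logNormInf A) * ‖q‖ := by
  rcases isEmpty_or_nonempty (Fin n) with hn | hn
  · simp [Subsingleton.elim q 0]
  rw [pi_norm_le_iff_of_nonempty]
  intro k
  set a : Fin n → ℝ := fun i => A (Pi.single i 1) k
  have hq : ∀ i, |q i| ≤ ‖q‖ := fun i => by simpa using norm_le_pi_norm q i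
  have hdiag : 0 ≤ 1 + ε * a k := by
    have : |a k| ≤ ‖A‖ := calc
      |a k| ≤ ‖A (Pi.single k 1)‖ := by simpa using norm_le_pi_norm (A (Pi.single k 1)) k
      _ ≤ ‖A‖ * ‖(Pi.single k 1 : Fin n → ℝ)‖ := A.le_opNorm _
      _ = ‖A‖ := by rw [Pi.norm_single, norm_one, mul_one]
    nlinarith [neg_abs_le (a k)]
  have hexpand :
      (q + ε • A q) k = (1 + ε * a k) * q k + ∑ i ∈ Finset.univ.erase k, ε * a i * q i := by
    have hsum : ε * ∑ i ∈ Finset.univ.erase k, q i * a i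
        = ∑ i ∈ Finset.univ.erase k, ε * a i * q i := by
      rw [Finset.mul_sum]
      exact Finset.sum_congr rfl fun i _ => by ring
    simp only [a] at hsum ⊢
    rw [Pi.add_apply, Pi.smul_apply, smul_eq_mul, apply_eq_sum_mul_apply_single,
      ← Finset.add_sum_erase _ _ (Finset.mem_univ k), mul_add, hsum]
    ring
  calc ‖(q + ε • A q) k‖
      ≤ |(1 + ε * a k) * q k| + ∑ i ∈ Finset.univ.erase k, |ε * a i * q i| := by
        rw [Real.norm_eq_abs, hexpand]
        exact (abs_add_le _ _).trans (add_le_add le_rfl (Finset.abs_sum_le_sum_abs _ _))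
    _ ≤ (1 + ε * a k) * ‖q‖ + ∑ i ∈ Finset.univ.erase k, ε * |a i| * ‖q‖ := by
        simp only [abs_mul, abs_of_nonneg hdiag, abs_of_nonneg hε]
        gcongr with i
        · exact hq k
        · exact hq i
    _ = (1 + ε * (a k + ∑ i ∈ Finset.univ.erase k, |a i|)) * ‖q‖ := by
        rw [← Finset.sum_mul, ← Finset.mul_sum]
        ring
    _ ≤ (1 + ε * logNormInf A) * ‖q‖ := by
        gcongr
        exact row_le_logNormInf A k

/-- Mean value inequality on `[q, p]` for `u ↦ u + ε f u`, whose derivative `I + ε Df` is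
controlled by `norm_add_smul_apply_le` once `ε` is below `1 / sup ‖Df‖` on the segment. -/
lemma exists_pos_norm_sub_add_smul_le {n : ℕ} {f : (Fin n → ℝ) → (Fin n → ℝ)} {Λ : ℝ}
    (hf : ContDiff ℝ 1 f) (hΛ : ∀ z, logNormInf (fderiv ℝ f z) ≤ Λ) (p q : Fin n → ℝ) :
    ∃ ε₀ > 0, ∀ ε ∈ Icc 0 ε₀, ‖p - q + ε • (f p - f q)‖ ≤ (1 + ε * Λ) * ‖p - q‖ := by
  set c : ℝ → Fin n → ℝ := fun θ => q + θ • (p - q)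
  have hc : ∀ θ, HasDerivAt c (p - q) θ := fun θ => by
    simpa [c] using ((hasDerivAt_id θ).smul_const (p - q)).const_add q
  obtain ⟨M, hM⟩ := isCompact_Icc.exists_bound_of_continuousOn
    ((hf.continuous_fderiv one_ne_zero).comp (by fun_prop : Continuous c)).continuousOn
      (s := Icc (0 : ℝ) 1)
  refine ⟨(|M| + 1)⁻¹, by positivity, fun ε hε => ?_⟩
  have hderiv : ∀ θ, HasDerivAt (fun θ => c θ + ε • f (c θ))
      ((p - q) + ε • fderiv ℝ f (c θ) (p - q)) θ := fun θ =>
    (hc θ).add <|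
      ((hf.differentiable one_ne_zero (c θ)).hasFDerivAt.comp_hasDerivAt θ (hc θ)).const_smul ε
  have hbound : ∀ θ ∈ Ico (0 : ℝ) 1,
      ‖(p - q) + ε • fderiv ℝ f (c θ) (p - q)‖ ≤ (1 + ε * Λ) * ‖p - q‖ := by
    intro θ hθ
    have hεA : ε * ‖fderiv ℝ f (c θ)‖ ≤ 1 := calc
      ε * ‖fderiv ℝ f (c θ)‖ ≤ (|M| + 1)⁻¹ * (|M| + 1) :=
        mul_le_mul hε.2 ((hM θ (Ico_subset_Icc_self hθ)).trans (by linarith [le_abs_self M]))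
          (norm_nonneg _) (by positivity)
      _ = 1 := inv_mul_cancel₀ (by positivity)
    refine (norm_add_smul_apply_le _ _ hε.1 hεA).trans ?_
    gcongr
    · exact hε.1
    · exact hΛ _
  have hmvt := norm_image_sub_le_of_norm_deriv_le_segment_01'
    (fun θ _ => (hderiv θ).hasDerivWithinAt) hbound
  have hends : p - q + ε • (f p - f q) = c 1 + ε • f (c 1) - (c 0 + ε • f (c 0)) := by
    simp only [c, one_smul, zero_smul, add_zero, add_sub_cancel]
    module
  rw [hends]
  exact hmvt

lemma sub_eq_integral_of_eq_add_integral {E : Type*} [NormedAddCommGroup E] [NormedSpace ℝ E]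
    {x G : ℝ → E} {a b s t : ℝ} (hG : IntegrableOn G (Icc a b))
    (hx : ∀ s ∈ Icc a b, x s = x a + ∫ τ in a..s, G τ) (hs : s ∈ Icc a b) (ht : t ∈ Icc a b) :
    x s - x t = ∫ τ in t..s, G τ := by
  have ha : a ∈ Icc a b := ⟨le_rfl, hs.1.trans hs.2⟩
  rw [hx s hs, hx t ht, add_sub_add_left_eq_sub]
  exact intervalIntegral.integral_interval_sub_left
    (hG.mono_set (uIcc_subset_Icc ha hs)).intervalIntegrable
    (hG.mono_set (uIcc_subset_Icc ha ht)).intervalIntegrable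

lemma eventually_norm_le_of_hasDerivWithinAt {E : Type*} [NormedAddCommGroup E]
    [NormedSpace ℝ E] {z Φ : ℝ → E} {v : E} {t Λ K r ε₀ : ℝ}
    (hΦ : HasDerivWithinAt Φ v (Ici t) t)
    (hz : ∀ᶠ s in 𝓝[>] t, ‖z s - z t - (Φ s - Φ t)‖ ≤ K * (s - t))
    (hε₀ : 0 < ε₀) (hv : ∀ ε ∈ Icc 0 ε₀, ‖z t + ε • v‖ ≤ (1 + ε * Λ) * ‖z t‖)
    (hr : Λ * ‖z t‖ + K < r) :
    ∀ᶠ s in 𝓝[>] t, ‖z s‖ ≤ ‖z t‖ + (s - t) * r := by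
  have hη : 0 < r - (Λ * ‖z t‖ + K) := sub_pos.2 hr
  have hΦ' := (hasDerivWithinAt_iff_isLittleO.1 (hΦ.mono Ioi_subset_Ici_self)).bound hη
  filter_upwards [hΦ', hz, Ioo_mem_nhdsGT (lt_add_of_pos_right t hε₀)] with s hΦs hzs hs
  have hst : 0 < s - t := sub_pos.2 hs.1
  rw [Real.norm_of_nonneg hst.le] at hΦs
  have hdecomp : z s = (z t + (s - t) • v) + (Φ s - Φ t - (s - t) • v)
      + (z s - z t - (Φ s - Φ t)) := by abel
  calc ‖z s‖
      ≤ ‖z t + (s - t) • v‖ + ‖Φ s - Φ t - (s - t) • v‖ + ‖z s - z t - (Φ s - Φ t)‖ :=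
        (congrArg norm hdecomp).trans_le norm_add₃_le
    _ ≤ (1 + (s - t) * Λ) * ‖z t‖ + (r - (Λ * ‖z t‖ + K)) * (s - t) + K * (s - t) := by
        gcongr
        exact hv (s - t) ⟨hst.le, by linarith [hs.2]⟩
    _ = ‖z t‖ + (s - t) * r := by ring

lemma eventually_norm_sub_le_of_perturbed_solution {n : ℕ} {f : (Fin n → ℝ) → (Fin n → ℝ)}
    {w x y : ℝ → Fin n → ℝ} {Λ K a b t r : ℝ} (hf : ContDiff ℝ 1 f) (hΛ : ∀ z, logNormInf (fderiv ℝ f z) ≤ Λ)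
    (hxc : ContinuousOn x (Icc a b)) (hyc : ContinuousOn y (Icc a b))
    (hw : IntegrableOn w (Icc a b)) (hwK : ∀ s ∈ Icc a b, ‖w s‖ ≤ K)
    (hx : ∀ s ∈ Icc a b, x s = x a + ∫ τ in a..s, (f (x τ) + w τ))
    (hy : ∀ s ∈ Icc a b, y s = y a + ∫ τ in a..s, f (y τ))
    (ht : t ∈ Ico a b) (hr : Λ * ‖x t - y t‖ + K < r) :
    ∀ᶠ s in 𝓝[>] t, ‖x s - y s‖ ≤ ‖x t - y t‖ + (s - t) * r := by
  have hfx : ContinuousOn (fun τ => f (x τ)) (Icc a b) := hf.continuous.comp_continuousOn hxc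
  have hfy : ContinuousOn (fun τ => f (y τ)) (Icc a b) := hf.continuous.comp_continuousOn hyc
  have hF := hfx.sub hfy
  have hI : Icc a b ∈ 𝓝[>] t := Icc_mem_nhdsGT_of_mem ht
  have htI : t ∈ Icc a b := Ico_subset_Icc_self ht
  have hΦ : HasDerivWithinAt (fun s => ∫ τ in t..s, (f (x τ) - f (y τ)))
      (f (x t) - f (y t)) (Ici t) t :=
    intervalIntegral.integral_hasDerivWithinAt_right IntervalIntegrable.refl
      ((hF.stronglyMeasurableAtFilter_nhdsWithin measurableSet_Icc t).filter_mono
        (nhdsWithin_le_of_mem hI))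
      ((hF t htI).mono_of_mem_nhdsWithin hI)
  obtain ⟨ε₀, hε₀, hcontr⟩ := exists_pos_norm_sub_add_smul_le hf hΛ (x t) (y t)
  refine eventually_norm_le_of_hasDerivWithinAt (z := fun s => x s - y s) hΦ ?_ hε₀ hcontr hr
  filter_upwards [hI, self_mem_nhdsWithin] with s hs hts
  have hii : ∀ {G : ℝ → Fin n → ℝ}, IntegrableOn G (Icc a b) → IntervalIntegrable G volume t s :=
    fun hG => (hG.mono_set (uIcc_subset_Icc htI hs)).intervalIntegrable
  have hxs := sub_eq_integral_of_eq_add_integral (G := fun τ => f (x τ) + w τ)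
    (hfx.integrableOn_Icc.add hw) hx hs htI
  have hys := sub_eq_integral_of_eq_add_integral hfy.integrableOn_Icc hy hs htI
  have hrest : x s - y s - (x t - y t)
      - ((∫ τ in t..s, (f (x τ) - f (y τ))) - ∫ τ in t..t, (f (x τ) - f (y τ)))
      = ∫ τ in t..s, w τ := by
    rw [intervalIntegral.integral_same, sub_zero, sub_sub_sub_comm, hxs, hys,
      intervalIntegral.integral_add (hii hfx.integrableOn_Icc) (hii hw),
      intervalIntegral.integral_sub (hii hfx.integrableOn_Icc) (hii hfy.integrableOn_Icc)]
    abel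
  rw [hrest, ← abs_of_pos (sub_pos.2 hts)]
  refine intervalIntegral.norm_integral_le_of_norm_le_const fun τ hτ => hwK τ ?_
  rw [uIoc_of_le hts.le] at hτ
  exact ⟨htI.1.trans hτ.1.le, hτ.2.trans hs.2⟩

/-- If `λ∞(Df(z)) ≤ Λ`, `‖gᵢ(z)‖ ≤ Kᵢ`, `|vᵢ(t)| ≤ Vᵢ`, `x` solves
`ẋ = f(x) + Σᵢ gᵢ(x)vᵢ(t)` and `y` solves `ẏ = f(y)` on `[t_k, t_k+h]` with
`y(t_k) = x(t_k)`, then `‖x(t_k+h) − y(t_k+h)‖ ≤ h·K'·φ(Λh)` with `K' = Σᵢ VᵢKᵢ`. -/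
theorem local_error_first_order {n m : ℕ}
    (f : (Fin n → ℝ) → (Fin n → ℝ)) (g : Fin m → (Fin n → ℝ) → (Fin n → ℝ))
    (v : Fin m → ℝ → ℝ) (K : Fin m → ℝ) (V : Fin m → ℝ) (Λ : ℝ) (tk h : ℝ)
    (x y : ℝ → Fin n → ℝ)
    (hh : 0 < h)
    (hf : ContDiff ℝ 1 f)
    (hΛ : ∀ z, logNormInf (fderiv ℝ f z) ≤ Λ)
    (hg : ∀ i, Continuous (g i))
    (hK : ∀ i z, ‖g i z‖ ≤ K i)
    (hv : ∀ i, Measurable (v i))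
    (hV : ∀ i, ∀ t ∈ Icc tk (tk + h), |v i t| ≤ V i)
    (hxc : ContinuousOn x (Icc tk (tk + h)))
    (hx : ∀ t ∈ Icc tk (tk + h),
      x t = x tk + ∫ s in tk..t, (f (x s) + ∑ i, v i s • g i (x s)))
    (hyc : ContinuousOn y (Icc tk (tk + h)))
    (hy : ∀ t ∈ Icc tk (tk + h), y t = y tk + ∫ s in tk..t, f (y s))
    (hinit : y tk = x tk) :
    ‖x (tk + h) - y (tk + h)‖ ≤ h * (∑ i, V i * K i) * phi (Λ * h) := by
  set w : ℝ → Fin n → ℝ := fun s => ∑ i, v i s • g i (x s)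
  have hwK : ∀ s ∈ Icc tk (tk + h), ‖w s‖ ≤ ∑ i, V i * K i := fun s hs =>
    (norm_sum_le _ _).trans <| Finset.sum_le_sum fun i _ => by
      rw [norm_smul, Real.norm_eq_abs]
      exact mul_le_mul (hV i s hs) (hK i _) (norm_nonneg _) ((abs_nonneg _).trans (hV i s hs))
  have hw : IntegrableOn w (Icc tk (tk + h)) :=
    IntegrableOn.of_bound measure_Icc_lt_top
      (Finset.aestronglyMeasurable_fun_sum _ fun i _ => (hv i).aestronglyMeasurable.smul
        ((hg i).comp_aestronglyMeasurable (hxc.aestronglyMeasurable measurableSet_Icc))) _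
      ((ae_restrict_iff' measurableSet_Icc).2 (Eventually.of_forall hwK))
  have hgronwall := le_gronwallBound_of_eventually_le (δ := 0) (hxc.sub hyc).norm (by simp [hinit])
    (fun t ht r hr => eventually_norm_sub_le_of_perturbed_solution hf hΛ hxc hyc hw hwK hx hy ht hr)
    (tk + h) ⟨by linarith, le_rfl⟩
  rwa [add_sub_cancel_left, gronwallBound_zero_eq_mul_phi _ _ hh.ne'] at hgronwall
end

section
/- Let h > 0, V > 0, and let v : [0,h] → ℝ be measurable with |v(t)| ≤ V for all t. Let w be the constant w = (1/h)∫₀ʰ v(s) ds. Then ∫₀ʰ | ∫₀ᵗ v(s) ds − t·w | dt ≤ V·h²/3. -/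
/-!
Writing `∫₀ʰ v = ∫₀ᵗ v + ∫ₜʰ v`, the deviation at time `t` is
`(1 - t/h) ∫₀ᵗ v - (t/h) ∫ₜʰ v`, where `|∫₀ᵗ v| ≤ V t` and `|∫ₜʰ v| ≤ V (h - t)`.
Hence it is at most `2V t (h - t) / h`, and integrating with `∫₀ʰ t (h - t) dt = h³/6`
gives `V h² / 3`.
-/

open MeasureTheory Set

theorem abs_sub_mul_div_mul_add_le {x y t h V : ℝ} (hh : 0 < h) (ht : t ∈ Icc 0 h)
    (hx : |x| ≤ V * t) (hy : |y| ≤ V * (h - t)) :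
    |x - t * ((1 / h) * (x + y))| ≤ 2 * V / h * (t * (h - t)) := by
  have hht : 0 ≤ h - t := sub_nonneg.2 ht.2
  have key : |(h - t) * x - t * y| ≤ 2 * V * (t * (h - t)) :=
    calc |(h - t) * x - t * y| ≤ (h - t) * |x| + t * |y| := by
          simpa only [abs_mul, abs_of_nonneg hht, abs_of_nonneg ht.1]
            using abs_sub ((h - t) * x) (t * y)
      _ ≤ (h - t) * (V * t) + t * (V * (h - t)) :=
          add_le_add (mul_le_mul_of_nonneg_left hx hht) (mul_le_mul_of_nonneg_left hy ht.1)
      _ = 2 * V * (t * (h - t)) := by ring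
  have hrw : x - t * ((1 / h) * (x + y)) = ((h - t) * x - t * y) / h := by
    field_simp; ring
  rw [hrw, abs_div, abs_of_pos hh, div_mul_eq_mul_div]
  exact div_le_div_of_nonneg_right key hh.le

theorem abs_intervalIntegral_le_of_abs_le {v : ℝ → ℝ} {a b V : ℝ} (hab : a ≤ b)
    (hbound : ∀ s ∈ Icc a b, |v s| ≤ V) : |∫ s in a..b, v s| ≤ V * (b - a) := by
  have := intervalIntegral.norm_integral_le_of_norm_le_const (f := v) fun s hs ↦ by
    rw [uIoc_of_le hab] at hs
    exact hbound s (Ioc_subset_Icc_self hs)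
  rwa [abs_of_nonneg (sub_nonneg.2 hab)] at this

theorem abs_intervalIntegral_sub_mul_average_le {v : ℝ → ℝ} {h V t : ℝ} (hh : 0 < h)
    (hv : IntegrableOn v (Icc 0 h)) (hbound : ∀ s ∈ Icc 0 h, |v s| ≤ V) (ht : t ∈ Icc 0 h) :
    |(∫ s in 0..t, v s) - t * ((1 / h) * ∫ s in 0..h, v s)| ≤ 2 * V / h * (t * (h - t)) := by
  have hvi : ∀ a ∈ Icc 0 h, ∀ b ∈ Icc 0 h, IntervalIntegrable v volume a b :=
    fun a ha b hb ↦ (hv.mono_set (uIcc_subset_Icc ha hb)).intervalIntegrable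
  have h0 : (0 : ℝ) ∈ Icc 0 h := left_mem_Icc.2 hh.le
  have hh' : h ∈ Icc 0 h := right_mem_Icc.2 hh.le
  rw [← intervalIntegral.integral_add_adjacent_intervals (hvi 0 h0 t ht) (hvi t ht h hh')]
  refine abs_sub_mul_div_mul_add_le hh ht ?_ ?_
  · simpa only [sub_zero] using abs_intervalIntegral_le_of_abs_le ht.1
      fun s hs ↦ hbound s (Icc_subset_Icc_right ht.2 hs)
  · exact abs_intervalIntegral_le_of_abs_le ht.2
      fun s hs ↦ hbound s (Icc_subset_Icc_left ht.1 hs)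

theorem integral_mul_sub_self (h : ℝ) : ∫ t in 0..h, t * (h - t) = h ^ 3 / 6 := by
  have hpoly : (fun t : ℝ ↦ t * (h - t)) = fun t ↦ h * t - t ^ 2 := by
    funext t; ring
  rw [hpoly, intervalIntegral.integral_sub (f := fun t ↦ h * t) (g := fun t ↦ t ^ 2)
    ((continuous_const.mul continuous_id).intervalIntegrable _ _)
    ((continuous_pow 2).intervalIntegrable _ _)]
  rw [intervalIntegral.integral_const_mul, integral_id, integral_pow]
  ring

theorem running_integral_constant_approx_integral_bound_general
    (h V : ℝ) (hh : 0 < h)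
    (v : ℝ → ℝ) (hv : Measurable v)
    (hbound : ∀ t ∈ Icc (0 : ℝ) h, |v t| ≤ V) :
    (∫ t in (0 : ℝ)..h,
        |(∫ s in (0 : ℝ)..t, v s) - t * ((1 / h) * ∫ s in (0 : ℝ)..h, v s)|)
      ≤ V * h ^ 2 / 3 := by
  have hvi : IntegrableOn v (Icc 0 h) :=
    Measure.integrableOn_of_bounded measure_Icc_lt_top.ne hv.aestronglyMeasurable
      ((ae_restrict_iff' measurableSet_Icc).2 (.of_forall hbound))
  calc _ ≤ ∫ t in 0..h, 2 * V / h * (t * (h - t)) := by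
        -- `norm_integral_le_of_norm_le` needs no integrability of the deviation itself.
        refine (le_abs_self _).trans ?_
        rw [← Real.norm_eq_abs]
        refine intervalIntegral.norm_integral_le_of_norm_le hh.le ?_
          (Continuous.intervalIntegrable (by fun_prop) _ _)
        refine .of_forall fun t ht ↦ ?_
        simpa using abs_intervalIntegral_sub_mul_average_le hh hvi hbound (Ioc_subset_Icc_self ht)
    _ = V * h ^ 2 / 3 := by
        rw [intervalIntegral.integral_const_mul, integral_mul_sub_self]
        field_simp
        ring

/-- For `h > 0`, `V > 0` and a measurable `v : [0,h] → ℝ` with `|v| ≤ V`,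
letting `w = (1/h)∫₀ʰ v`, we have `∫₀ʰ |∫₀ᵗ v − t·w| dt ≤ V·h²/3`. -/
theorem running_integral_constant_approx_integral_bound
    (h V : ℝ) (hh : 0 < h) (hV : 0 < V)
    (v : ℝ → ℝ) (hv : Measurable v)
    (hbound : ∀ t ∈ Icc (0 : ℝ) h, |v t| ≤ V) :
    (∫ t in (0 : ℝ)..h,
        |(∫ s in (0 : ℝ)..t, v s) - t * ((1 / h) * ∫ s in (0 : ℝ)..h, v s)|)
      ≤ V * h ^ 2 / 3 :=
  running_integral_constant_approx_integral_bound_general h V hh v hv hbound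
end

section
/- Let h > 0, V > 0, and let v : [0,h] → ℝ be measurable with |v(t)| ≤ V for all t. Define the moments μ₀ = (1/h)∫₀ʰ v(t) dt and μ₁ = (4/h²)∫₀ʰ (t − h/2)·v(t) dt. Then |μ₀| ≤ V and |μ₁| ≤ (1 − μ₀²/V²)·V. -/
/-!
For any `s ∈ [a, b]`, writing `t - c = (s - c) + (t - s)` and using `(t - s) v(t) ≤ V |t - s|` gives
`∫ (t - c) v ≤ (s - c) ∫ v + V ((s - a)² + (b - s)²) / 2`. For `c` the midpoint, the choice
`s = c - (∫ v) / (2V)` minimises the right-hand side; it lies in `[a, b]` because `|∫ v| ≤ V (b - a)`,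
and it yields `∫ (t - c) v ≤ V (b - a)² / 4 - (∫ v)² / (4V)`. Applying this to `-v` as well bounds the
absolute value, and scaling by `4 / h²` gives the estimate for `μ₁`.
-/

open MeasureTheory Set

theorem integral_abs_sub_of_mem_Icc {a b s : ℝ} (hs : s ∈ Icc a b) :
    ∫ t in a..b, |t - s| = ((s - a) ^ 2 + (b - s) ^ 2) / 2 := by
  have hcont : Continuous fun t : ℝ => |t - s| := by fun_prop
  have left : ∫ t in a..s, |t - s| = (s - a) ^ 2 / 2 := by
    rw [intervalIntegral.integral_of_le hs.1, ← uIoc_of_le hs.1, uIoc_comm]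
    simpa [abs_sub_comm a s, sq_abs, one_add_one_eq_two] using
      integral_pow_abs_sub_uIoc (a := s) (b := a) 1
  have right : ∫ t in s..b, |t - s| = (b - s) ^ 2 / 2 := by
    rw [intervalIntegral.integral_of_le hs.2, ← uIoc_of_le hs.2]
    simpa [sq_abs, one_add_one_eq_two] using integral_pow_abs_sub_uIoc (a := s) (b := b) 1
  rw [← intervalIntegral.integral_add_adjacent_intervals (hcont.intervalIntegrable a s)
    (hcont.intervalIntegrable s b), left, right, add_div]

section BoundedIntegrand

variable {a b V : ℝ} {v : ℝ → ℝ}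

theorem intervalIntegrable_of_abs_le (hab : a ≤ b) (hv : Measurable v)
    (hbound : ∀ t ∈ Icc a b, |v t| ≤ V) : IntervalIntegrable v volume a b := by
  rw [intervalIntegrable_iff_integrableOn_Icc_of_le hab]
  refine Measure.integrableOn_of_bounded (M := V) measure_Icc_lt_top.ne
    hv.aestronglyMeasurable ?_
  filter_upwards [ae_restrict_mem measurableSet_Icc] with t ht
  exact hbound t ht

theorem abs_integral_le_of_abs_le (hab : a ≤ b) (hbound : ∀ t ∈ Icc a b, |v t| ≤ V) :
    |∫ t in a..b, v t| ≤ V * (b - a) := by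
  have h := intervalIntegral.norm_integral_le_of_norm_le_const (f := v) fun t ht ↦
    hbound t (Ioc_subset_Icc_self (uIoc_of_le hab ▸ ht))
  rwa [abs_of_nonneg (sub_nonneg.2 hab)] at h

theorem integral_sub_mul_le (hvi : IntervalIntegrable v volume a b)
    (hbound : ∀ t ∈ Icc a b, |v t| ≤ V) (c : ℝ) {s : ℝ} (hs : s ∈ Icc a b) :
    ∫ t in a..b, (t - c) * v t ≤
      (s - c) * (∫ t in a..b, v t) + V * (((s - a) ^ 2 + (b - s) ^ 2) / 2) := by
  have hab : a ≤ b := hs.1.trans hs.2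
  have hpointwise : ∀ t ∈ Icc a b, (t - c) * v t ≤ (s - c) * v t + V * |t - s| := by
    intro t ht
    have h₁ : (t - s) * v t ≤ |t - s| * |v t| := (le_abs_self _).trans_eq (abs_mul _ _)
    have h₂ : |t - s| * |v t| ≤ |t - s| * V :=
      mul_le_mul_of_nonneg_left (hbound t ht) (abs_nonneg _)
    linarith
  have habs : IntervalIntegrable (fun t ↦ V * |t - s|) volume a b :=
    Continuous.intervalIntegrable (by fun_prop) a b
  calc ∫ t in a..b, (t - c) * v t
      ≤ ∫ t in a..b, ((s - c) * v t + V * |t - s|) :=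
        intervalIntegral.integral_mono_on hab
          (hvi.continuousOn_mul (by fun_prop)) ((hvi.const_mul _).add habs) hpointwise
    _ = (s - c) * (∫ t in a..b, v t) + V * (((s - a) ^ 2 + (b - s) ^ 2) / 2) := by
        rw [intervalIntegral.integral_add (hvi.const_mul _) habs,
          intervalIntegral.integral_const_mul, intervalIntegral.integral_const_mul,
          integral_abs_sub_of_mem_Icc hs]

theorem integral_sub_midpoint_mul_le (hV : 0 < V) (hab : a ≤ b)
    (hvi : IntervalIntegrable v volume a b) (hbound : ∀ t ∈ Icc a b, |v t| ≤ V) :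
    ∫ t in a..b, (t - (a + b) / 2) * v t ≤
      V * (b - a) ^ 2 / 4 - (∫ t in a..b, v t) ^ 2 / (4 * V) := by
  set m := ∫ t in a..b, v t
  have hm := abs_integral_le_of_abs_le hab hbound
  set s := (a + b) / 2 - m / (2 * V) with hs_def
  have hs : s ∈ Icc a b := by
    have hshift : |m / (2 * V)| ≤ (b - a) / 2 := by
      rw [abs_div, abs_of_pos (by positivity : 0 < 2 * V), div_le_iff₀ (by positivity)]
      linarith
    constructor <;> linarith [abs_le.1 hshift, hs_def]
  calc ∫ t in a..b, (t - (a + b) / 2) * v t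
      ≤ (s - (a + b) / 2) * m + V * (((s - a) ^ 2 + (b - s) ^ 2) / 2) :=
        integral_sub_mul_le hvi hbound _ hs
    _ = V * (b - a) ^ 2 / 4 - m ^ 2 / (4 * V) := by
        simp only [s]
        field_simp
        ring

theorem abs_integral_sub_midpoint_mul_le (hV : 0 < V) (hab : a ≤ b)
    (hvi : IntervalIntegrable v volume a b) (hbound : ∀ t ∈ Icc a b, |v t| ≤ V) :
    |∫ t in a..b, (t - (a + b) / 2) * v t| ≤
      V * (b - a) ^ 2 / 4 - (∫ t in a..b, v t) ^ 2 / (4 * V) := by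
  have hupper := integral_sub_midpoint_mul_le hV hab hvi hbound
  have hlower := integral_sub_midpoint_mul_le hV hab hvi.neg fun t ht ↦
    (abs_neg (v t)).trans_le (hbound t ht)
  simp only [Pi.neg_apply, mul_neg, intervalIntegral.integral_neg, neg_sq] at hlower
  exact abs_le.2 ⟨by linarith, hupper⟩

end BoundedIntegrand

/-- For `h > 0`, `V > 0` and a measurable `v : [0,h] → ℝ` with `|v| ≤ V`,
the moments `μ₀ = (1/h)∫₀ʰ v` and `μ₁ = (4/h²)∫₀ʰ (t − h/2)·v(t) dt` satisfy
`|μ₀| ≤ V` and `|μ₁| ≤ (1 − μ₀²/V²)·V`. -/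
theorem moment_bounds
    (h V : ℝ) (hh : 0 < h) (hV : 0 < V)
    (v : ℝ → ℝ) (hv : Measurable v)
    (hbound : ∀ t ∈ Icc (0 : ℝ) h, |v t| ≤ V) :
    |(1 / h) * ∫ t in (0 : ℝ)..h, v t| ≤ V ∧
    |(4 / h ^ 2) * ∫ t in (0 : ℝ)..h, (t - h / 2) * v t| ≤
      (1 - ((1 / h) * ∫ t in (0 : ℝ)..h, v t) ^ 2 / V ^ 2) * V := by
  have hvi := intervalIntegrable_of_abs_le hh.le hv hbound
  have hm := abs_integral_le_of_abs_le hh.le hbound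
  have hI := abs_integral_sub_midpoint_mul_le hV hh.le hvi hbound
  rw [zero_add, sub_zero] at hI
  rw [sub_zero] at hm
  rw [abs_mul, abs_mul, abs_of_pos (by positivity : 0 < 1 / h),
    abs_of_pos (by positivity : 0 < 4 / h ^ 2)]
  constructor
  · rw [one_div_mul_eq_div, div_le_iff₀ hh]
    exact hm
  · calc 4 / h ^ 2 * |∫ t in (0 : ℝ)..h, (t - h / 2) * v t|
        ≤ 4 / h ^ 2 * (V * h ^ 2 / 4 - (∫ t in (0 : ℝ)..h, v t) ^ 2 / (4 * V)) := by gcongr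
      _ = (1 - ((1 / h) * ∫ t in (0 : ℝ)..h, v t) ^ 2 / V ^ 2) * V := by
        field_simp
end

section
/- Let h > 0, V > 0, and let μ₀, μ₁ be real numbers with |μ₀| ≤ V and |μ₁| ≤ (1 − μ₀²/V²)·V. Define the step function w : [0,h] → ℝ by w(t) = a₀ := μ₀ − μ₁ for t ∈ [0, h/2) and w(t) = a₁ := μ₀ + μ₁ for t ∈ [h/2, h]. Then (1/h)∫₀ʰ w(t) dt = μ₀, (4/h²)∫₀ʰ (t − h/2)·w(t) dt = μ₁, and |w(t)| ≤ 5V/4 for all t ∈ [0,h] (in particular |a₀|, |a₁| ≤ 5V/4). -/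
open MeasureTheory Set

/-- For `|μ₀| ≤ V` and `|μ₁| ≤ (1 − μ₀²/V²)·V`, the step function
`w(t) = μ₀ − μ₁` on `[0, h/2)`, `w(t) = μ₀ + μ₁` on `[h/2, h]`, matches the moments:
`(1/h)∫₀ʰ w = μ₀`, `(4/h²)∫₀ʰ (t − h/2)·w(t) dt = μ₁`, and `|w(t)| ≤ 5V/4` on `[0,h]`. -/
theorem step_function_approximation
    (h V μ₀ μ₁ : ℝ) (hh : 0 < h) (hV : 0 < V)
    (hμ₀ : |μ₀| ≤ V) (hμ₁ : |μ₁| ≤ (1 - μ₀ ^ 2 / V ^ 2) * V) :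
    (1 / h) * (∫ t in (0 : ℝ)..h, (if t < h / 2 then μ₀ - μ₁ else μ₀ + μ₁)) = μ₀ ∧
    (4 / h ^ 2) *
        (∫ t in (0 : ℝ)..h, (t - h / 2) * (if t < h / 2 then μ₀ - μ₁ else μ₀ + μ₁)) = μ₁ ∧
    ∀ t ∈ Icc (0 : ℝ) h, |if t < h / 2 then μ₀ - μ₁ else μ₀ + μ₁| ≤ 5 * V / 4 := by
  have hne : h ≠ 0 := hh.ne'
  set f : ℝ → ℝ := fun t => if t < h / 2 then μ₀ - μ₁ else μ₀ + μ₁ with hf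
  have hmeas : Measurable f := by
    apply Measurable.ite (measurableSet_lt measurable_id measurable_const) <;>
      exact measurable_const
  -- interval integrability of f and of (t - h/2) * f on any bounded interval
  have hII : ∀ x y : ℝ, IntervalIntegrable f volume x y := by
    intro x y
    rw [intervalIntegrable_iff]
    refine Measure.integrableOn_of_bounded ?_ hmeas.aestronglyMeasurable
      (M := max |μ₀ - μ₁| |μ₀ + μ₁|) (ae_of_all _ fun t => ?_)
    · exact (measure_Ioc_lt_top).ne
    · simp only [Real.norm_eq_abs, hf]
      split
      · exact le_max_left _ _
      · exact le_max_right _ _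
  have hII2 : ∀ x y : ℝ, IntervalIntegrable (fun t => (t - h / 2) * f t) volume x y := by
    intro x y
    rw [intervalIntegrable_iff]
    refine Measure.integrableOn_of_bounded ?_
      (((measurable_id.sub_const _).mul hmeas).aestronglyMeasurable)
      (M := (|x| + |y| + |h|) * max |μ₀ - μ₁| |μ₀ + μ₁|) ?_
    · exact (measure_Ioc_lt_top).ne
    · filter_upwards [ae_restrict_mem measurableSet_Ioc] with t ht
      rw [Real.norm_eq_abs, abs_mul]
      have h1 : |t - h / 2| ≤ |x| + |y| + |h| := by
        have ht1 : min x y ≤ t := ht.1.le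
        have ht2 : t ≤ max x y := ht.2
        have hx1 := le_max_left |x| |y|
        have hx2 := le_max_right |x| |y|
        have hta : |t| ≤ max |x| |y| := by
          rw [abs_le]
          constructor
          · have h1 := neg_abs_le x
            have h2 := neg_abs_le y
            rcases le_total x y with hxy | hxy <;>
              simp only [min_eq_left hxy, min_eq_right hxy] at ht1 <;> linarith
          · have h1 := le_abs_self x
            have h2 := le_abs_self y
            rcases le_total x y with hxy | hxy <;>
              simp only [max_eq_right hxy, max_eq_left hxy] at ht2 <;> linarith
        have htri : |t - h / 2| ≤ |t| + |h / 2| := abs_sub _ _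
        have habs2 : |h / 2| = |h| / 2 := by rw [abs_div]; norm_num
        have : max |x| |y| ≤ |x| + |y| := max_le (le_add_of_nonneg_right (abs_nonneg y)) (le_add_of_nonneg_left (abs_nonneg x))
        have hh0 : 0 ≤ |h| := abs_nonneg h
        linarith
      have h2 : |f t| ≤ max |μ₀ - μ₁| |μ₀ + μ₁| := by
        simp only [hf]; split
        · exact le_max_left _ _
        · exact le_max_right _ _
      exact mul_le_mul h1 h2 (abs_nonneg _) (by positivity)
  have hae : ∀ᵐ x : ℝ, x ≠ h / 2 := by
    rw [ae_iff]
    simp [Real.volume_singleton]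
  -- first piece: f = μ₀ - μ₁ a.e. on (0, h/2)
  have e1 : (∫ t in (0 : ℝ)..(h/2), f t) = (h/2) * (μ₀ - μ₁) := by
    rw [intervalIntegral.integral_congr_ae (g := fun _ => μ₀ - μ₁) ?_]
    · simp; ring
    · filter_upwards [hae] with t ht hmem
      rw [Set.uIoc_of_le (by linarith)] at hmem
      have : t < h / 2 := lt_of_le_of_ne hmem.2 ht
      simp [hf, this]
  have e2 : (∫ t in (h/2 : ℝ)..h, f t) = (h/2) * (μ₀ + μ₁) := by
    rw [intervalIntegral.integral_congr (g := fun _ => μ₀ + μ₁) ?_]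
    · simp; ring
    · intro t ht
      rw [Set.uIcc_of_le (by linarith)] at ht
      have : ¬ t < h / 2 := not_lt.mpr ht.1
      simp [hf, this]
  have e3 : (∫ t in (0 : ℝ)..(h/2), (t - h/2) * f t) = (- (h/2)^2 / 2) * (μ₀ - μ₁) := by
    rw [intervalIntegral.integral_congr_ae (g := fun t => (t - h/2) * (μ₀ - μ₁)) ?_]
    · rw [intervalIntegral.integral_mul_const,
        intervalIntegral.integral_sub intervalIntegral.intervalIntegrable_id (intervalIntegrable_const),
        integral_id, intervalIntegral.integral_const]
      simp only [smul_eq_mul]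
      ring
    · filter_upwards [hae] with t ht hmem
      rw [Set.uIoc_of_le (by linarith)] at hmem
      have : t < h / 2 := lt_of_le_of_ne hmem.2 ht
      simp [hf, this]
  have e4 : (∫ t in (h/2 : ℝ)..h, (t - h/2) * f t) = ((h/2)^2 / 2) * (μ₀ + μ₁) := by
    rw [intervalIntegral.integral_congr (g := fun t => (t - h/2) * (μ₀ + μ₁)) ?_]
    · rw [intervalIntegral.integral_mul_const,
        intervalIntegral.integral_sub intervalIntegral.intervalIntegrable_id (intervalIntegrable_const),
        integral_id, intervalIntegral.integral_const]
      simp only [smul_eq_mul]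
      ring
    · intro t ht
      rw [Set.uIcc_of_le (by linarith)] at ht
      have : ¬ t < h / 2 := not_lt.mpr ht.1
      simp [hf, this]
  have split1 : (∫ t in (0 : ℝ)..h, f t)
      = (∫ t in (0 : ℝ)..(h/2), f t) + ∫ t in (h/2 : ℝ)..h, f t :=
    (intervalIntegral.integral_add_adjacent_intervals (hII 0 (h/2)) (hII (h/2) h)).symm
  have split2 : (∫ t in (0 : ℝ)..h, (t - h/2) * f t)
      = (∫ t in (0 : ℝ)..(h/2), (t - h/2) * f t) + ∫ t in (h/2 : ℝ)..h, (t - h/2) * f t :=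
    (intervalIntegral.integral_add_adjacent_intervals (hII2 0 (h/2)) (hII2 (h/2) h)).symm
  -- bound on values
  have hbound : ∀ t ∈ Icc (0 : ℝ) h, |f t| ≤ 5 * V / 4 := by
    intro t _
    have h1 : |μ₁| ≤ (1 - μ₀ ^ 2 / V ^ 2) * V := hμ₁
    have hs : |μ₀| + |μ₁| ≤ 5 * V / 4 := by
      have h3 : (1 - μ₀ ^ 2 / V ^ 2) * V = V - μ₀ ^ 2 / V := by
        field_simp
      have h2 : (|μ₀| - μ₀ ^ 2 / V) * V = |μ₀| * V - μ₀ ^ 2 := by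
        field_simp
      have habs : μ₀ ^ 2 = |μ₀| ^ 2 := (sq_abs μ₀).symm
      have hxs : |μ₀| - μ₀ ^ 2 / V ≤ V / 4 := by
        nlinarith [sq_nonneg (|μ₀| - V / 2)]
      linarith [h1.trans_eq h3]
    simp only [hf]
    split
    · calc |μ₀ - μ₁| ≤ |μ₀| + |μ₁| := abs_sub _ _
        _ ≤ 5 * V / 4 := hs
    · calc |μ₀ + μ₁| ≤ |μ₀| + |μ₁| := abs_add_le _ _
        _ ≤ 5 * V / 4 := hs
  refine ⟨?_, ?_, hbound⟩
  · rw [split1, e1, e2]; field_simp; ring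
  · rw [split2, e3, e4]; field_simp; ring
end

section
/- Let h > 0, V > 0, and let μ₀, μ₁ be real numbers with |μ₀| ≤ V and |μ₁| ≤ (1 − μ₀²/V²)·V. Define the affine function w : [0,h] → ℝ by w(t) = μ₀ + 3μ₁·(t − h/2)/h. Then (1/h)∫₀ʰ w(t) dt = μ₀, (4/h²)∫₀ʰ (t − h/2)·w(t) dt = μ₁, and |w(t)| ≤ 5V/3 for all t ∈ [0,h]. -/
open MeasureTheory Set intervalIntegral

/-- For `|μ₀| ≤ V` and `|μ₁| ≤ (1 − μ₀²/V²)·V`, the affine function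
`w(t) = μ₀ + 3μ₁·(t − h/2)/h` matches the moments:
`(1/h)∫₀ʰ w = μ₀`, `(4/h²)∫₀ʰ (t − h/2)·w(t) dt = μ₁`, and `|w(t)| ≤ 5V/3` on `[0,h]`. -/
theorem affine_function_approximation
    (h V μ₀ μ₁ : ℝ) (hh : 0 < h) (hV : 0 < V)
    (hμ₀ : |μ₀| ≤ V) (hμ₁ : |μ₁| ≤ (1 - μ₀ ^ 2 / V ^ 2) * V) :
    (1 / h) * (∫ t in (0 : ℝ)..h, (μ₀ + 3 * μ₁ * (t - h / 2) / h)) = μ₀ ∧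
    (4 / h ^ 2) *
        (∫ t in (0 : ℝ)..h, (t - h / 2) * (μ₀ + 3 * μ₁ * (t - h / 2) / h)) = μ₁ ∧
    ∀ t ∈ Icc (0 : ℝ) h, |μ₀ + 3 * μ₁ * (t - h / 2) / h| ≤ 5 * V / 3 := by
  have hne : h ≠ 0 := hh.ne'
  have e1 : ∀ t : ℝ, μ₀ + 3 * μ₁ * (t - h / 2) / h
      = (3 * μ₁ / h) * t + (μ₀ - 3 * μ₁ / 2) := by
    intro t; field_simp; ring
  have e2 : ∀ t : ℝ, (t - h / 2) * (μ₀ + 3 * μ₁ * (t - h / 2) / h)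
      = (3 * μ₁ / h) * t ^ 2 + (μ₀ - 3 * μ₁) * t + (3 * μ₁ * h / 4 - μ₀ * h / 2) := by
    intro t; field_simp; ring
  refine ⟨?_, ?_, ?_⟩
  · simp only [e1]
    rw [intervalIntegral.integral_add
        (by apply Continuous.intervalIntegrable; continuity)
        (by apply Continuous.intervalIntegrable; continuity),
      intervalIntegral.integral_const_mul, integral_id, intervalIntegral.integral_const]
    field_simp; ring
  · simp only [e2]
    rw [intervalIntegral.integral_add
        (by apply Continuous.intervalIntegrable; continuity)
        (by apply Continuous.intervalIntegrable; continuity),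
      intervalIntegral.integral_add
        (by apply Continuous.intervalIntegrable; continuity)
        (by apply Continuous.intervalIntegrable; continuity),
      intervalIntegral.integral_const_mul, intervalIntegral.integral_const_mul,
      integral_id, integral_pow, intervalIntegral.integral_const]
    field_simp; ring
  · intro t ht
    have hb : |t - h / 2| ≤ h / 2 := by
      rw [abs_le]; constructor <;> [linarith [ht.1]; linarith [ht.2]]
    have h1 : |3 * μ₁ * (t - h / 2) / h| ≤ 3 / 2 * |μ₁| := by
      rw [abs_div, abs_mul, abs_of_pos hh, div_le_iff₀ hh]
      calc |3 * μ₁| * |t - h / 2| ≤ |3 * μ₁| * (h / 2) :=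
            mul_le_mul_of_nonneg_left hb (abs_nonneg _)
        _ = 3 / 2 * |μ₁| * h := by
            rw [abs_mul, abs_of_nonneg (by norm_num : (0:ℝ) ≤ 3)]; ring
    have hfin : |μ₀| + 3 / 2 * |μ₁| ≤ 5 * V / 3 := by
      have hx : μ₀ ^ 2 = |μ₀| ^ 2 := (sq_abs μ₀).symm
      have hx0 : 0 ≤ |μ₀| := abs_nonneg _
      have key : (1 - μ₀ ^ 2 / V ^ 2) * V = (V ^ 2 - |μ₀| ^ 2) / V := by
        rw [← hx]; field_simp
      have hμ₁' : |μ₁| ≤ (V ^ 2 - |μ₀| ^ 2) / V := key ▸ hμ₁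
      have h2 : |μ₁| * V ≤ V ^ 2 - |μ₀| ^ 2 := by
        rw [← le_div_iff₀ hV]; exact hμ₁'
      nlinarith [sq_nonneg (|μ₀| - V / 3), hV.le, abs_nonneg μ₁]
    calc |μ₀ + 3 * μ₁ * (t - h / 2) / h|
        ≤ |μ₀| + |3 * μ₁ * (t - h / 2) / h| := abs_add_le _ _
      _ ≤ |μ₀| + 3 / 2 * |μ₁| := by linarith
      _ ≤ 5 * V / 3 := hfin
end

section
/- Let p ≥ 1/2 be a real number. Then the maximum over c₀, c₁ ∈ [−1, 1] of | c₀ + (1 − c₀²)·c₁·p | equals p + 1/(4p). -/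
open Set

/-- For `p ≥ 1/2`, the maximum over `c₀, c₁ ∈ [−1,1]` of
`|c₀ + (1 − c₀²)·c₁·p|` equals `p + 1/(4p)`. -/
theorem reparameterized_amplitude_max (p : ℝ) (hp : 1 / 2 ≤ p) :
    IsGreatest
      ((fun c : ℝ × ℝ => |c.1 + (1 - c.1 ^ 2) * c.2 * p|) ''
        (Icc (-1 : ℝ) 1 ×ˢ Icc (-1 : ℝ) 1))
      (p + 1 / (4 * p)) := by
  have hp0 : 0 < p := by linarith
  constructor
  · refine ⟨(1 / (2 * p), 1), ⟨⟨?_, ?_⟩, by norm_num, le_refl 1⟩, ?_⟩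
    · have : 0 ≤ 1 / (2 * p) := by positivity
      linarith
    · rw [div_le_one (by linarith)]; linarith
    · have h : (1 / (2 * p) + (1 - (1 / (2 * p)) ^ 2) * 1 * p) = p + 1 / (4 * p) := by
        field_simp; ring
      simp only [h]
      rw [abs_of_pos (by positivity)]
  · rintro y ⟨⟨c0, c1⟩, ⟨⟨h0l, h0r⟩, h1l, h1r⟩, rfl⟩
    simp only
    have h1 : |c1| ≤ 1 := abs_le.mpr ⟨h1l, h1r⟩
    have h0 : |c0| ≤ 1 := abs_le.mpr ⟨h0l, h0r⟩
    have hsq : 0 ≤ 1 - c0 ^ 2 := by nlinarith [abs_nonneg c0, sq_abs c0]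
    calc |c0 + (1 - c0 ^ 2) * c1 * p| ≤ |c0| + |(1 - c0 ^ 2) * c1 * p| := abs_add_le _ _
      _ = |c0| + (1 - c0 ^ 2) * |c1| * p := by
          rw [abs_mul, abs_mul, abs_of_nonneg hsq, abs_of_pos hp0]
      _ ≤ |c0| + (1 - c0 ^ 2) * 1 * p := by
          nlinarith [mul_nonneg (mul_nonneg hsq hp0.le) (sub_nonneg.mpr h1)]
      _ ≤ p + 1 / (4 * p) := by
          have key : |c0| + (1 - c0 ^ 2) * 1 * p - p ≤ 1 / (4 * p) := by
            rw [show c0 ^ 2 = |c0| ^ 2 from (sq_abs c0).symm, le_div_iff₀ (by positivity : (0:ℝ) < 4 * p)]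
            nlinarith [sq_nonneg (2 * p * |c0| - 1), sq_abs c0, abs_nonneg c0]
          linarith
end
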